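/- Let m, n, q be positive integers such that mnq is even. Then the series Σ_{k=1}^{∞} F_{2nk+mnq} / ( Π_{j=0}^{m} F_{nk+jnq}^2 ) converges, and its sum equals (1 / F_{mnq}) · Σ_{k=1}^{q} 1 / ( Π_{j=0}^{m−1} F_{nk+jnq}^2 ). -/

import Mathlib

/-!
For even `d`, Binet's formula and `(φψ)^d = 1` give `F_{u+d}^2 - F_u^2 = F_{2u+d} F_d`.
With `u = nk`, `d = mnq` and `g k = 1 / ∏_{j<m} F_{nk+jnq}^2`, the extreme factors of the
length-`(m+1)` product are `F_{nk}` and `F_{nk+mnq}`, so the `k`-th term of the series is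
`(g k - g (k+q)) / F_{mnq}`. The partial sums telescope with shift `q`, leaving
`∑_{k=1}^q g k` minus `q` consecutive values of `g`, which tend to `0`.
-/

open Filter Topology Finset

lemma Nat.tendsto_fib_atTop : Tendsto Nat.fib atTop atTop :=
  tendsto_atTop_mono' atTop ((eventually_ge_atTop 5).mono fun _ h ↦ Nat.le_fib_self h) tendsto_id

lemma Nat.fib_add_sq_sub_sq {u d : ℕ} (hd : Even d) :
    (Nat.fib (u + d) : ℝ) ^ 2 - (Nat.fib u : ℝ) ^ 2 = Nat.fib (2 * u + d) * Nat.fib d := by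
  simp only [Real.coe_fib_eq, pow_add, two_mul]
  set P := Real.goldenRatio ^ u
  set S := Real.goldenConj ^ u
  set A := Real.goldenRatio ^ d
  set B := Real.goldenConj ^ d
  have hAB : A * B = 1 := by
    rw [← mul_pow, Real.goldenRatio_mul_goldenConj, hd.neg_one_pow]
  clear_value P S A B
  field_simp
  linear_combination ((Real.sqrt 5 ^ 2 - 1) * (2 * P * S - P ^ 2 - S ^ 2)
    + Real.sqrt 5 ^ 2 * (P - S) ^ 2) * hAB

lemma inv_prod_range_sub_inv_prod_range_succ {K : Type*} [Field K] (a : ℕ → K) (m : ℕ)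
    (ha : ∀ j ∈ range (m + 1), a j ≠ 0) :
    1 / ∏ j ∈ range m, a j - 1 / ∏ j ∈ range m, a (j + 1) =
      (a m - a 0) / ∏ j ∈ range (m + 1), a j := by
  have hprod := prod_ne_zero_iff.2 ha
  have hfirst : ∏ j ∈ range m, a j ≠ 0 := by
    rw [prod_range_succ] at hprod; exact left_ne_zero_of_mul hprod
  have hlast : ∏ j ∈ range m, a (j + 1) ≠ 0 := by
    rw [prod_range_succ'] at hprod; exact left_ne_zero_of_mul hprod
  rw [div_sub_div _ _ hfirst hlast, div_eq_div_iff (mul_ne_zero hfirst hlast) hprod]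
  linear_combination (∏ j ∈ range m, a (j + 1)) * prod_range_succ a m
    - (∏ j ∈ range m, a j) * prod_range_succ' a m

lemma sum_Icc_sub_shift {M : Type*} [AddCommGroup M] (g : ℕ → M) (q N : ℕ) :
    ∑ k ∈ Icc 1 N, (g k - g (k + q)) =
      ∑ k ∈ Icc 1 q, g k - ∑ i ∈ range q, g (N + 1 + i) := by
  induction N with
  | zero =>
    rw [Icc_eq_empty (by omega), sum_empty, ← Ico_add_one_right_eq_Icc, sum_Ico_eq_sum_range]
    simp [add_comm]
  | succ N ih =>
    have hshift : ∑ i ∈ range q, g (N + 1 + i) + g (N + 1 + q) =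
        ∑ i ∈ range q, g (N + 1 + 1 + i) + g (N + 1) := by
      rw [← sum_range_succ (fun i ↦ g (N + 1 + i)), sum_range_succ']
      congr 1
      exact sum_congr rfl fun i _ ↦ congrArg g (by omega)
    rw [sum_Icc_succ_top (by omega), ih, eq_sub_of_add_eq hshift.symm]
    abel

lemma tendsto_sum_Icc_sub_shift {M : Type*} [AddCommGroup M] [TopologicalSpace M]
    [IsTopologicalAddGroup M] {g : ℕ → M} (hg : Tendsto g atTop (𝓝 0)) (q : ℕ) :
    Tendsto (fun N ↦ ∑ k ∈ Icc 1 N, (g k - g (k + q))) atTop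
      (𝓝 (∑ k ∈ Icc 1 q, g k)) := by
  have htail : Tendsto (fun N ↦ ∑ i ∈ range q, g (N + 1 + i)) atTop (𝓝 0) := by
    simpa using tendsto_finsetSum (range q) fun i _ ↦
      hg.comp (tendsto_atTop_mono (fun N ↦ show N ≤ N + 1 + i by omega) tendsto_id)
  have := (tendsto_const_nhds (x := ∑ k ∈ Icc 1 q, g k)).sub htail
  rw [sub_zero] at this
  simpa only [sum_Icc_sub_shift] using this

lemma tendsto_prod_range_fib_sq_atTop {m : ℕ} (hm : 0 < m) (d : ℕ) :
    Tendsto (fun s ↦ ∏ j ∈ range m, (Nat.fib (s + j * d) : ℝ) ^ 2) atTop atTop := by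
  have hle : ∀ᶠ s in atTop, Nat.fib s ≤ ∏ j ∈ range m, Nat.fib (s + j * d) ^ 2 := by
    filter_upwards [eventually_ge_atTop 1] with s hs
    have hpos : ∀ j, 1 ≤ Nat.fib (s + j * d) ^ 2 := fun j ↦
      Nat.one_le_pow _ _ (Nat.fib_pos.2 (by omega))
    calc Nat.fib s ≤ Nat.fib s ^ 2 := Nat.le_self_pow two_ne_zero _
      _ ≤ ∏ j ∈ range m, Nat.fib (s + j * d) ^ 2 := by
        simpa using single_le_prod' (fun j _ ↦ hpos j) (mem_range.2 hm)
  simpa [Function.comp_def] using (tendsto_natCast_atTop_atTop (R := ℝ)).comp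
    (tendsto_atTop_mono' atTop hle Nat.tendsto_fib_atTop)

lemma fib_div_prod_range_fib_sq {s d m : ℕ} (hs : 0 < s) (hmd : 0 < m * d)
    (heven : Even (m * d)) :
    (Nat.fib (2 * s + m * d) : ℝ) / ∏ j ∈ range (m + 1), (Nat.fib (s + j * d) : ℝ) ^ 2 =
      (1 / ∏ j ∈ range m, (Nat.fib (s + j * d) : ℝ) ^ 2 -
        1 / ∏ j ∈ range m, (Nat.fib (s + d + j * d) : ℝ) ^ 2) / Nat.fib (m * d) := by
  have ha : ∀ j ∈ range (m + 1), (Nat.fib (s + j * d) : ℝ) ^ 2 ≠ 0 := fun j _ ↦ by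
    have := Nat.fib_pos.2 (show 0 < s + j * d by omega)
    positivity
  have hF : (Nat.fib (m * d) : ℝ) ≠ 0 := by
    have := Nat.fib_pos.2 hmd
    positivity
  simp_rw [show ∀ j, s + d + j * d = s + (j + 1) * d from fun j ↦ by ring]
  rw [inv_prod_range_sub_inv_prod_range_succ _ m ha, zero_mul, add_zero,
    Nat.fib_add_sq_sub_sq heven]
  field_simp

/-- Theorem (`mnq` even):
`Σ_{k=1}^{∞} F_{2nk+mnq} / (Π_{j=0}^{m} F_{nk+jnq}^2)
  = (1/F_{mnq}) Σ_{k=1}^{q} 1/(Π_{j=0}^{m−1} F_{nk+jnq}^2)`. -/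
theorem stmt_17 (m n q : ℕ) (hm : 0 < m) (hn : 0 < n) (hq : 0 < q)
    (heven : Even (m * n * q)) :
    Tendsto (fun N => ∑ k ∈ Finset.Icc 1 N,
        (Nat.fib (2 * n * k + m * n * q) : ℝ) /
          ∏ j ∈ Finset.range (m + 1), (Nat.fib (n * k + j * n * q) : ℝ) ^ 2)
      atTop
      (𝓝 ((1 / (Nat.fib (m * n * q) : ℝ)) *
        ∑ k ∈ Finset.Icc 1 q,
          (1 : ℝ) / ∏ j ∈ Finset.range m, (Nat.fib (n * k + j * n * q) : ℝ) ^ 2)) := by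
  simp only [mul_assoc]
  set g : ℕ → ℝ := fun k ↦ 1 / ∏ j ∈ range m, (Nat.fib (n * k + j * (n * q)) : ℝ) ^ 2
  have hg : Tendsto g atTop (𝓝 0) := by
    simpa [g, Function.comp_def] using tendsto_inv_atTop_zero.comp
      ((tendsto_prod_range_fib_sq_atTop hm (n * q)).comp (tendsto_id.const_mul_atTop' hn))
  rw [one_div_mul_eq_div]
  refine ((tendsto_sum_Icc_sub_shift hg q).div_const _).congr fun N ↦ ?_
  rw [sum_div]
  refine sum_congr rfl fun k hk ↦ ?_
  have hk0 : 0 < k := (mem_Icc.1 hk).1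
  rw [fib_div_prod_range_fib_sq (by positivity) (by positivity)
    (by simpa only [mul_assoc] using heven)]
  simp only [g, mul_add]
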